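/- Let U ⊆ ℝ² be a nonempty open set and Γ : U → (ℝ² →ₗ[ℝ] ℝ² →ₗ[ℝ] ℝ²) a smooth symmetric Christoffel map with Ricci tensor R_{ab}. Then for every point x ∈ U there exist an open neighbourhood V ⊆ U of x and a smooth 1-form Υ : V → (ℝ² →ₗ[ℝ] ℝ) such that the Christoffel map Γ̂(x) u v = Γ(x) u v + Υ(x)(u) • v + Υ(x)(v) • u (which has the same unparameterised geodesics as Γ) has symmetric Ricci tensor: R̂_{ab} = R̂_{ba} on V. -/

import Mathlib

noncomputable section

/-- The plane ℝ², as `Fin 2 → ℝ`. -/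
abbrev E2 : Type := Fin 2 → ℝ

/-- The standard basis vectors of ℝ². -/
def bas (a : Fin 2) : E2 := Pi.single a 1

/-- Partial derivative ∂ₐ of a scalar function on ℝ². -/
def pd (a : Fin 2) (f : E2 → ℝ) (x : E2) : ℝ := fderiv ℝ f x (bas a)

/-- Components Γ_{ab}{}^c of a Christoffel map Γ : ℝ² → (ℝ² →ₗ ℝ² →ₗ ℝ²). -/
def chr (Γ : E2 → (E2 →ₗ[ℝ] E2 →ₗ[ℝ] E2)) (a b c : Fin 2) (x : E2) : ℝ :=
  Γ x (bas a) (bas b) c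

/-- Ricci tensor components built from Christoffel components `Γc a b c` (= Γ_{ab}{}^c):
`R_{ad} = ∂_cΓ_{ad}{}^c − ∂_aΓ_{cd}{}^c + Γ_{cb}{}^cΓ_{ad}{}^b − Γ_{ab}{}^cΓ_{cd}{}^b`. -/
def ricciC (Γc : Fin 2 → Fin 2 → Fin 2 → E2 → ℝ) (a d : Fin 2) (x : E2) : ℝ :=
  (∑ c, pd c (Γc a d c) x) - (∑ c, pd a (Γc c d c) x)
  + (∑ b, ∑ c, Γc c b c x * Γc a d b x)
  - (∑ b, ∑ c, Γc a b c x * Γc c d b x)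

/-- Covariant derivative of the Ricci tensor:
`∇_aR_{bc} = ∂_aR_{bc} − Γ_{ab}{}^dR_{dc} − Γ_{ac}{}^dR_{bd}`. -/
def covRicciC (Γc : Fin 2 → Fin 2 → Fin 2 → E2 → ℝ) (a b c : Fin 2) (x : E2) : ℝ :=
  pd a (ricciC Γc b c) x - (∑ d, Γc a b d x * ricciC Γc d c x)
    - (∑ d, Γc a c d x * ricciC Γc b d x)

/-- `Y_{abc} = ∇_aR_{bc} − ∇_bR_{ac}`. -/
def YC (Γc : Fin 2 → Fin 2 → Fin 2 → E2 → ℝ) (a b c : Fin 2) (x : E2) : ℝ :=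
  covRicciC Γc a b c x - covRicciC Γc b a c x

/-- Symmetrization of a Christoffel map. -/
def GammaS (Γ : E2 → (E2 →ₗ[ℝ] E2 →ₗ[ℝ] E2)) (y : E2) : E2 →ₗ[ℝ] E2 →ₗ[ℝ] E2 :=
  ((1:ℝ)/2) • (Γ y + (Γ y).flip)

/-- The 1-form `Υ = −(1/3)·trace(GammaS Γ)`. -/
def Ups (Γ : E2 → (E2 →ₗ[ℝ] E2 →ₗ[ℝ] E2)) (y : E2) : E2 →ₗ[ℝ] ℝ :=
  (-(1:ℝ)/3) • ∑ c, (LinearMap.proj c ∘ₗ (GammaS Γ y (bas c)))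

/-- The projectively changed connection `Γ̂ u v = Γₛ u v + Υ(u)•v + Υ(v)•u`. -/
def GammaHat (Γ : E2 → (E2 →ₗ[ℝ] E2 →ₗ[ℝ] E2)) (y : E2) : E2 →ₗ[ℝ] E2 →ₗ[ℝ] E2 :=
  GammaS Γ y + (Ups Γ y).smulRight LinearMap.id + ((Ups Γ y).smulRight LinearMap.id).flip

lemma ups_eq (Γ : E2 → (E2 →ₗ[ℝ] E2 →ₗ[ℝ] E2)) (a : Fin 2) (y : E2) :
    Ups Γ y (bas a) = (-(1:ℝ)/6) *
      ((chr Γ 0 a 0 y + chr Γ a 0 0 y) + (chr Γ 1 a 1 y + chr Γ a 1 1 y)) := by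
  simp [Ups, GammaS, chr, LinearMap.smul_apply, LinearMap.sum_apply, Fin.sum_univ_two,
    LinearMap.add_apply, LinearMap.flip_apply, Pi.add_apply, Pi.smul_apply, smul_eq_mul]
  ring

lemma chr_hat (Γ : E2 → (E2 →ₗ[ℝ] E2 →ₗ[ℝ] E2)) (a b c : Fin 2) (y : E2) :
    chr (GammaHat Γ) a b c y =
      (1/2) * (chr Γ a b c y + chr Γ b a c y)
      + Ups Γ y (bas a) * (if c = b then 1 else 0)
      + Ups Γ y (bas b) * (if c = a then 1 else 0) := by
  simp [GammaHat, GammaS, chr, LinearMap.add_apply, LinearMap.smul_apply,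
    LinearMap.flip_apply, LinearMap.smulRight_apply, LinearMap.id_apply,
    Pi.add_apply, Pi.smul_apply, smul_eq_mul, bas, Pi.single_apply]
  ring

lemma chr_hat_symm (Γ : E2 → (E2 →ₗ[ℝ] E2 →ₗ[ℝ] E2)) (a b c : Fin 2) :
    chr (GammaHat Γ) a b c = chr (GammaHat Γ) b a c := by
  funext y; rw [chr_hat, chr_hat]; ring

lemma chr_hat_trace (Γ : E2 → (E2 →ₗ[ℝ] E2 →ₗ[ℝ] E2)) (d : Fin 2) (y : E2) :
    chr (GammaHat Γ) 0 d 0 y + chr (GammaHat Γ) 1 d 1 y = 0 := by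
  rw [chr_hat, chr_hat, ups_eq, ups_eq, ups_eq]
  fin_cases d <;> simp <;> ring

lemma chr_hat_smooth (Γ : E2 → (E2 →ₗ[ℝ] E2 →ₗ[ℝ] E2)) (U : Set E2)
    (hΓs : ∀ a b c : Fin 2, ContDiffOn ℝ (⊤ : ℕ∞) (chr Γ a b c) U) (a b c : Fin 2) :
    ContDiffOn ℝ (⊤ : ℕ∞) (chr (GammaHat Γ) a b c) U := by
  have h : chr (GammaHat Γ) a b c = fun y =>
      (1/2) * (chr Γ a b c y + chr Γ b a c y)
      + ((-(1:ℝ)/6) * ((chr Γ 0 a 0 y + chr Γ a 0 0 y) + (chr Γ 1 a 1 y + chr Γ a 1 1 y)))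
          * (if c = b then 1 else 0)
      + ((-(1:ℝ)/6) * ((chr Γ 0 b 0 y + chr Γ b 0 0 y) + (chr Γ 1 b 1 y + chr Γ b 1 1 y)))
          * (if c = a then 1 else 0) := by
    funext y; rw [chr_hat, ups_eq, ups_eq]
  rw [h]
  apply ContDiffOn.add
  apply ContDiffOn.add
  · exact (contDiffOn_const).mul ((hΓs a b c).add (hΓs b a c))
  · exact ((contDiffOn_const).mul (((hΓs 0 a 0).add (hΓs a 0 0)).add
      ((hΓs 1 a 1).add (hΓs a 1 1)))).mul contDiffOn_const
  · exact ((contDiffOn_const).mul (((hΓs 0 b 0).add (hΓs b 0 0)).add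
      ((hΓs 1 b 1).add (hΓs b 1 1)))).mul contDiffOn_const

/-- near every point, a smooth symmetric Christoffel map can be modified by
a projective change (keeping the same unparameterised geodesics) so that its Ricci tensor
becomes symmetric. -/
theorem stmt_3 (U : Set E2) (hUo : IsOpen U) (hUne : U.Nonempty)
    (Γ : E2 → (E2 →ₗ[ℝ] E2 →ₗ[ℝ] E2))
    (hΓs : ∀ a b c : Fin 2, ContDiffOn ℝ (⊤ : ℕ∞) (chr Γ a b c) U)
    (hsym : ∀ x ∈ U, ∀ u v : E2, Γ x u v = Γ x v u) :
    ∀ x ∈ U, ∃ V : Set E2, IsOpen V ∧ x ∈ V ∧ V ⊆ U ∧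
      ∃ (Υ : E2 → (E2 →ₗ[ℝ] ℝ)) (Γ' : E2 → (E2 →ₗ[ℝ] E2 →ₗ[ℝ] E2)),
        (∀ a : Fin 2, ContDiffOn ℝ (⊤ : ℕ∞) (fun y => Υ y (bas a)) V) ∧
        (∀ y ∈ V, ∀ u v : E2, Γ' y u v = Γ y u v + Υ y u • v + Υ y v • u) ∧
        ∀ y ∈ V, ∀ a b : Fin 2, ricciC (chr Γ') a b y = ricciC (chr Γ') b a y := by
  intro x hx
  refine ⟨U, hUo, hx, subset_rfl, Ups Γ, GammaHat Γ, ?_, ?_, ?_⟩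
  · -- smoothness of Υ components
    intro a
    have h : (fun y => Ups Γ y (bas a)) = fun y =>
        (-(1:ℝ)/6) * ((chr Γ 0 a 0 y + chr Γ a 0 0 y) + (chr Γ 1 a 1 y + chr Γ a 1 1 y)) :=
      funext fun y => ups_eq Γ a y
    rw [h]
    exact (contDiffOn_const).mul (((hΓs 0 a 0).add (hΓs a 0 0)).add
      ((hΓs 1 a 1).add (hΓs a 1 1)))
  · -- the formula for Γ' on U
    intro y hy u v
    have h1 : Γ y v u = Γ y u v := hsym y hy v u
    simp only [GammaHat, GammaS, LinearMap.add_apply, LinearMap.smul_apply,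
      LinearMap.flip_apply, LinearMap.smulRight_apply, LinearMap.id_apply, h1]
    congr 1
    rw [← two_smul ℝ (Γ y u v), smul_smul]
    norm_num
  · -- Ricci symmetry
    intro y hy a b
    have hD : ∀ a b c : Fin 2, DifferentiableAt ℝ (chr (GammaHat Γ) a b c) y := by
      intro a b c
      exact ((chr_hat_smooth Γ U hΓs a b c).differentiableOn (by simp)).differentiableAt
        (hUo.mem_nhds hy)
    have hB : ∀ a d : Fin 2,
        pd a (chr (GammaHat Γ) 0 d 0) y + pd a (chr (GammaHat Γ) 1 d 1) y = 0 := by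
      intro a d
      have hadd := fderiv_add (hD 0 d 0) (hD 1 d 1)
      have hz : (chr (GammaHat Γ) 0 d 0 + chr (GammaHat Γ) 1 d 1)
          = fun _ => (0:ℝ) := funext fun z => chr_hat_trace Γ d z
      rw [hz] at hadd
      have h0 : fderiv ℝ (fun _ : E2 => (0:ℝ)) y = 0 := fderiv_const_apply 0
      rw [h0] at hadd
      unfold pd
      rw [← ContinuousLinearMap.add_apply, ← hadd]
      simp
    have key : ricciC (chr (GammaHat Γ)) 0 1 y = ricciC (chr (GammaHat Γ)) 1 0 y := by
      have hB01 := hB 0 1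
      have hB10 := hB 1 0
      have t0 := chr_hat_trace Γ 0 y
      have t1 := chr_hat_trace Γ 1 y
      simp only [ricciC, Fin.sum_univ_two]
      simp only [chr_hat_symm Γ 1 0] at hB01 hB10 t0 t1 ⊢
      have s1 : chr (GammaHat Γ) 0 1 1 y = -chr (GammaHat Γ) 0 0 0 y := by linarith
      have s2 : chr (GammaHat Γ) 1 1 1 y = -chr (GammaHat Γ) 0 1 0 y := by linarith
      rw [s1, s2]
      linear_combination hB10 - hB01
    fin_cases a <;> fin_cases b
    · rfl
    · exact key
    · exact key.symm
    · rfl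

end
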